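/- arXiv:1608.01189 — 4 statements merged into one kernel-verified Lean document; each statement's English description precedes it below -/
import Mathlib

section
/- For every integer k ≥ 1 and every integer n ≥ 1, the k-power propagation time of the path P_n on n vertices equals ⌊n/2⌋. -/
namespace PowerProp

open SimpleGraph

variable {V : Type*} {α β : Type*}

/-- The closed neighborhood `N[S]` of a set of vertices. -/
def closedNbhd (G : SimpleGraph V) (S : Set V) : Set V :=
  S ∪ ⋃ v ∈ S, G.neighborSet v

/-- One propagation step of the `k`-power domination process. -/
def propStep (k : ℕ) (G : SimpleGraph V) (S : Set V) : Set V :=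
  S ∪ {w | ∃ v ∈ S, w ∈ G.neighborSet v \ S ∧ (G.neighborSet v \ S).ncard ≤ k}

/-- `S^[t]`: the set observed after `t` steps (step 1 is the domination step). -/
def powerIter (k : ℕ) (G : SimpleGraph V) (S : Set V) : ℕ → Set V
  | 0 => S
  | 1 => closedNbhd G S
  | (t + 2) => propStep k G (powerIter k G S (t + 1))

/-- `S` is a `k`-power dominating set of `G`. -/
def IsPDS (k : ℕ) (G : SimpleGraph V) (S : Set V) : Prop :=
  ∃ l, powerIter k G S l = Set.univ

/-- The `k`-power domination number `γ_{P,k}(G)`. -/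
noncomputable def pdNum (k : ℕ) (G : SimpleGraph V) : ℕ :=
  sInf {n | ∃ S : Set V, S.ncard = n ∧ IsPDS k G S}

/-- `S` is a minimum `k`-power dominating set of `G`. -/
def IsMinPDS (k : ℕ) (G : SimpleGraph V) (S : Set V) : Prop :=
  IsPDS k G S ∧ S.ncard = pdNum k G

/-- `ppt_k(G,S)`, the `k`-power propagation time of `G` with `S`. -/
noncomputable def pptOf (k : ℕ) (G : SimpleGraph V) (S : Set V) : ℕ :=
  sInf {l | powerIter k G S l = Set.univ}

/-- `ppt_k(G)`, the (minimum) `k`-power propagation time of `G`. -/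
noncomputable def ppt (k : ℕ) (G : SimpleGraph V) : ℕ :=
  sInf {t | ∃ S : Set V, IsMinPDS k G S ∧ pptOf k G S = t}

end PowerProp

namespace PathPPT

open SimpleGraph PowerProp

variable {n k : ℕ}

/-- The ball of radius `t` around `v` in the path. -/
def ball (v : Fin n) (t : ℕ) : Set (Fin n) :=
  {w | (w : ℕ) ≤ v + t ∧ (v : ℕ) ≤ w + t}

lemma powerIter_empty (k : ℕ) (G : SimpleGraph V) : ∀ l, powerIter k G ∅ l = ∅ := by
  intro l
  induction l with
  | zero => rfl
  | succ t ih =>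
    cases t with
    | zero => simp [powerIter, closedNbhd]
    | succ s =>
      show propStep k G (powerIter k G ∅ (s + 1)) = ∅
      rw [ih]
      simp [propStep]

lemma closedNbhd_singleton (v : Fin n) : closedNbhd (pathGraph n) {v} = ball v 1 := by
  ext w
  simp only [closedNbhd, ball, Set.mem_union, Set.mem_singleton_iff, Set.mem_iUnion,
    mem_neighborSet, pathGraph_adj, Set.mem_setOf_eq, Fin.ext_iff, exists_prop]
  constructor
  · rintro (h | ⟨x, hx, h⟩) <;> omega
  · intro h
    by_cases hw : (w : ℕ) = v
    · left; omega
    · right; exact ⟨v, rfl, by omega⟩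

lemma propStep_ball (hk : 1 ≤ k) (v : Fin n) (s : ℕ) :
    propStep k (pathGraph n) (ball v (s + 1)) = ball v (s + 2) := by
  apply Set.Subset.antisymm
  · rintro w (hw | ⟨x, hx, ⟨hadj, hnot⟩, _⟩)
    · exact ⟨by have := hw.1; omega, by have := hw.2; omega⟩
    · rw [mem_neighborSet, pathGraph_adj] at hadj
      obtain ⟨hx1, hx2⟩ := hx
      constructor <;> omega
  · intro w hw
    obtain ⟨hw1, hw2⟩ := hw
    by_cases hwt : w ∈ ball v (s + 1)
    · exact Or.inl hwt
    · right
      simp only [ball, Set.mem_setOf_eq, not_and, not_le] at hwt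
      by_cases hcase : (w : ℕ) = v + s + 2
      · -- right end: the forcing vertex is at v + s + 1
        have hxlt : (v : ℕ) + s + 1 < n := by have := w.isLt; omega
        refine ⟨⟨v + s + 1, hxlt⟩, ⟨by simp only [Fin.val_mk]; omega, by simp only [Fin.val_mk]; omega⟩, ⟨?_, ?_⟩, ?_⟩
        · rw [mem_neighborSet, pathGraph_adj]; left; simp; omega
        · simp only [ball, Set.mem_setOf_eq]; omega
        · have hset : (pathGraph n).neighborSet ⟨v + s + 1, hxlt⟩ \ ball v (s + 1) = {w} := by
            ext u
            simp only [Set.mem_diff, mem_neighborSet, pathGraph_adj, ball, Set.mem_setOf_eq,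
              Set.mem_singleton_iff, Fin.ext_iff]
            omega
          rw [hset, Set.ncard_singleton]; exact hk
      · -- left end: w = v - s - 2, forcing vertex is at w + 1 = v - s - 1
        have hcase' : (v : ℕ) = w + s + 2 := by omega
        have hxlt : (w : ℕ) + 1 < n := by have := v.isLt; omega
        refine ⟨⟨w + 1, hxlt⟩, ⟨by simp; omega, by simp; omega⟩, ⟨?_, ?_⟩, ?_⟩
        · rw [mem_neighborSet, pathGraph_adj]; right; simp
        · simp only [ball, Set.mem_setOf_eq]; omega
        · have hset : (pathGraph n).neighborSet ⟨w + 1, hxlt⟩ \ ball v (s + 1) = {w} := by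
            ext u
            simp only [Set.mem_diff, mem_neighborSet, pathGraph_adj, ball, Set.mem_setOf_eq,
              Set.mem_singleton_iff, Fin.ext_iff]
            omega
          rw [hset, Set.ncard_singleton]; exact hk

lemma powerIter_singleton (hk : 1 ≤ k) (v : Fin n) (t : ℕ) :
    powerIter k (pathGraph n) {v} t = ball v t := by
  induction t with
  | zero =>
    ext w
    simp only [powerIter, Set.mem_singleton_iff, ball, Set.mem_setOf_eq, Fin.ext_iff]
    omega
  | succ t ih =>
    cases t with
    | zero => exact closedNbhd_singleton v
    | succ s =>
      show propStep k (pathGraph n) (powerIter k (pathGraph n) {v} (s + 1)) = ball v (s + 2)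
      rw [ih]
      exact propStep_ball hk v s

lemma ball_eq_univ_iff (hn : 1 ≤ n) (v : Fin n) (t : ℕ) :
    ball v t = Set.univ ↔ (v : ℕ) ≤ t ∧ n - 1 ≤ v + t := by
  rw [Set.eq_univ_iff_forall]
  constructor
  · intro h
    have h0 := h ⟨0, hn⟩
    have h1 := h ⟨n - 1, by omega⟩
    simp only [ball, Set.mem_setOf_eq] at h0 h1
    omega
  · intro h w
    have := w.isLt
    exact ⟨by omega, by omega⟩

lemma pptOf_singleton (hk : 1 ≤ k) (hn : 1 ≤ n) (v : Fin n) :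
    pptOf k (pathGraph n) {v} = max (v : ℕ) (n - 1 - v) := by
  have hset : {l | powerIter k (pathGraph n) {v} l = Set.univ}
      = Set.Ici (max (v : ℕ) (n - 1 - v)) := by
    ext l
    rw [Set.mem_setOf_eq, powerIter_singleton hk, ball_eq_univ_iff hn, Set.mem_Ici]
    have := v.isLt
    omega
  rw [pptOf, hset, csInf_Ici]

lemma isPDS_singleton (hk : 1 ≤ k) (hn : 1 ≤ n) (v : Fin n) :
    IsPDS k (pathGraph n) {v} := by
  refine ⟨max (v : ℕ) (n - 1 - v), ?_⟩
  rw [powerIter_singleton hk, ball_eq_univ_iff hn]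
  have := v.isLt
  omega

lemma pdNum_eq (hk : 1 ≤ k) (hn : 1 ≤ n) : pdNum k (pathGraph n) = 1 := by
  set T := {m | ∃ S : Set (Fin n), S.ncard = m ∧ IsPDS k (pathGraph n) S} with hT
  have h1 : 1 ∈ T := ⟨{⟨0, hn⟩}, Set.ncard_singleton _, isPDS_singleton hk hn _⟩
  have h0 : 0 ∉ T := by
    rintro ⟨S, hS, l, hl⟩
    rw [Set.ncard_eq_zero S.toFinite] at hS
    subst hS
    rw [powerIter_empty] at hl
    have : Nonempty (Fin n) := ⟨⟨0, hn⟩⟩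
    exact (Set.univ_nonempty (α := Fin n)).ne_empty hl.symm
  refine le_antisymm (Nat.sInf_le h1) ?_
  have hmem := Nat.sInf_mem ⟨1, h1⟩
  rcases Nat.eq_zero_or_pos (sInf T) with h | h
  · exact absurd (h ▸ hmem) h0
  · exact h

end PathPPT

open SimpleGraph PowerProp PathPPT in
/-- For every `k ≥ 1` and `n ≥ 1`, the `k`-power propagation time
of the path `P_n` equals `⌊n/2⌋`. -/
theorem ppt_pathGraph (k n : ℕ) (hk : 1 ≤ k) (hn : 1 ≤ n) :
    ppt k (pathGraph n) = n / 2 := by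
  have key : {t | ∃ S, IsMinPDS k (pathGraph n) S ∧ pptOf k (pathGraph n) S = t}
      = {t | ∃ v : Fin n, max (v : ℕ) (n - 1 - v) = t} := by
    ext t
    constructor
    · rintro ⟨S, ⟨hPDS, hcard⟩, rfl⟩
      rw [pdNum_eq hk hn] at hcard
      obtain ⟨v, rfl⟩ := Set.ncard_eq_one.mp hcard
      exact ⟨v, (pptOf_singleton hk hn v).symm⟩
    · rintro ⟨v, rfl⟩
      exact ⟨{v}, ⟨isPDS_singleton hk hn v,
        by rw [Set.ncard_singleton, pdNum_eq hk hn]⟩, pptOf_singleton hk hn v⟩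
  rw [ppt, key]
  have hvlt : (n - 1) / 2 < n := by omega
  apply le_antisymm
  · apply Nat.sInf_le
    exact ⟨⟨(n - 1) / 2, hvlt⟩, by simp only [Fin.val_mk]; omega⟩
  · have hne : {t | ∃ v : Fin n, max (v : ℕ) (n - 1 - v) = t}.Nonempty :=
      ⟨_, ⟨⟨(n - 1) / 2, hvlt⟩, rfl⟩⟩
    apply le_csInf hne
    rintro t ⟨v, rfl⟩
    have := v.isLt
    omega
end

section
/- For every integer k ≥ 1 and every integer n ≥ 3, the k-power propagation time of the cycle C_n on n vertices equals ⌊n/2⌋. -/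
namespace PowerProp

section

variable {V : Type*} (k : ℕ) (G : SimpleGraph V)

theorem powerIter_empty (l : ℕ) : powerIter k G ∅ l = ∅ := by
  induction l using Nat.twoStepInduction with
  | zero => rfl
  | one => simp [powerIter, closedNbhd]
  | more l _ ih => simp [powerIter, ih, propStep]

theorem not_isPDS_empty [Nonempty V] : ¬ IsPDS k G ∅ := by
  rintro ⟨l, hl⟩
  rw [powerIter_empty] at hl
  exact Set.empty_ne_univ hl

variable {k G}

theorem mem_propStep_of_neighborSet_diff_subset (hk : 1 ≤ k) {S : Set V} {v w : V}
    (hv : v ∈ S) (hw : w ∈ G.neighborSet v) (hforced : G.neighborSet v \ S ⊆ {w}) :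
    w ∈ propStep k G S := by
  by_cases hwS : w ∈ S
  · exact Or.inl hwS
  · refine Or.inr ⟨v, hv, ⟨hw, hwS⟩, ?_⟩
    calc (G.neighborSet v \ S).ncard ≤ ({w} : Set V).ncard := Set.ncard_le_ncard hforced
      _ = 1 := Set.ncard_singleton w
      _ ≤ k := hk

theorem pdNum_eq_one [Finite V] [Nonempty V] {a : V} (ha : IsPDS k G {a}) :
    pdNum k G = 1 := by
  refine le_antisymm (Nat.sInf_le ⟨{a}, Set.ncard_singleton a, ha⟩) ?_
  refine le_csInf ⟨1, {a}, Set.ncard_singleton a, ha⟩ ?_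
  rintro _ ⟨S, rfl, hS⟩
  rw [Nat.one_le_iff_ne_zero, Ne, Set.ncard_eq_zero]
  rintro rfl
  exact not_isPDS_empty k G hS

theorem pptOf_eq_of_forall_iff {S : Set V} {T : ℕ}
    (h : ∀ l, powerIter k G S l = Set.univ ↔ T ≤ l) : pptOf k G S = T := by
  rw [pptOf, show {l | powerIter k G S l = Set.univ} = Set.Ici T from Set.ext h, csInf_Ici]

/-- When every singleton is a `k`-power dominating set, the minimum ones are exactly the
singletons. -/
theorem ppt_eq_of_forall_singleton [Finite V] [Nonempty V] {T : ℕ}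
    (hPDS : ∀ a, IsPDS k G {a}) (hT : ∀ a, pptOf k G {a} = T) : ppt k G = T := by
  have hnum : pdNum k G = 1 := pdNum_eq_one (hPDS (Classical.arbitrary V))
  have htimes : {t | ∃ S, IsMinPDS k G S ∧ pptOf k G S = t} = {T} := by
    ext t
    constructor
    · rintro ⟨S, ⟨-, hS⟩, rfl⟩
      obtain ⟨a, rfl⟩ := Set.ncard_eq_one.mp (hS.trans hnum)
      exact hT a
    · rintro rfl
      let a := Classical.arbitrary V
      exact ⟨{a}, ⟨hPDS a, by rw [Set.ncard_singleton, hnum]⟩, hT a⟩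
  rw [ppt, htimes, csInf_singleton]

end

section

open SimpleGraph Fin.CommRing

variable {n k : ℕ}

/-- The vertices of `C_{n+2}` at cyclic distance at most `t` from `a`. -/
def arc (a : Fin (n + 2)) (t : ℕ) : Set (Fin (n + 2)) :=
  (fun i : ℤ => a + i) '' Set.Icc (-(t : ℤ)) t

theorem mem_arc {a x : Fin (n + 2)} {t : ℕ} :
    x ∈ arc a t ↔ ∃ i : ℤ, |i| ≤ t ∧ a + i = x := by
  simp only [arc, Set.mem_image, Set.mem_Icc, abs_le]

theorem add_intCast_mem_arc (a : Fin (n + 2)) {t : ℕ} {i : ℤ} (hi : |i| ≤ t) :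
    a + (i : Fin (n + 2)) ∈ arc a t :=
  mem_arc.2 ⟨i, hi, rfl⟩

theorem arc_mono (a : Fin (n + 2)) : Monotone (arc a) := fun _ _ hst =>
  Set.image_mono (Set.Icc_subset_Icc (by omega) (by omega))

theorem arc_zero (a : Fin (n + 2)) : arc a 0 = {a} := by
  simp [arc]

theorem cycleGraph_neighborSet_add_intCast (a : Fin (n + 2)) (i : ℤ) :
    (cycleGraph (n + 2)).neighborSet (a + i) = {a + ↑(i - 1), a + ↑(i + 1)} := by
  rw [cycleGraph_neighborSet]
  push_cast
  ring_nf

theorem closedNbhd_singleton_cycleGraph (a : Fin (n + 2)) :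
    closedNbhd (cycleGraph (n + 2)) {a} = arc a 1 := by
  ext x
  simp only [closedNbhd, Set.mem_union, Set.mem_singleton_iff, Set.mem_iUnion, exists_prop,
    exists_eq_left, cycleGraph_neighborSet, Set.mem_insert_iff, mem_arc, abs_le, Nat.cast_one]
  constructor
  · rintro (rfl | rfl | rfl)
    · exact ⟨0, by simp⟩
    · exact ⟨-1, by simp [sub_eq_add_neg]⟩
    · exact ⟨1, by simp⟩
  · rintro ⟨i, hi, rfl⟩
    obtain rfl | rfl | rfl : i = -1 ∨ i = 0 ∨ i = 1 := by omega
    all_goals simp [sub_eq_add_neg]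

theorem propStep_arc (hk : 1 ≤ k) (a : Fin (n + 2)) {t : ℕ} (ht : 1 ≤ t) :
    propStep k (cycleGraph (n + 2)) (arc a t) = arc a (t + 1) := by
  refine (Set.union_subset (arc_mono a t.le_succ) ?_).antisymm fun x hx => ?_
  · rintro w ⟨v, hv, ⟨hw, -⟩, -⟩
    obtain ⟨i, hi, rfl⟩ := mem_arc.1 hv
    rw [cycleGraph_neighborSet_add_intCast] at hw
    rw [abs_le] at hi
    rcases hw with rfl | rfl <;> exact add_intCast_mem_arc a (abs_le.2 (by omega))
  by_cases hxt : x ∈ arc a t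
  · exact Or.inl hxt
  obtain ⟨j, hj, rfl⟩ := mem_arc.1 hx
  -- The new vertex `a + j` is forced by its neighbour `a ± t`, whose other neighbour is observed.
  obtain rfl | rfl : j = t + 1 ∨ j = -(t + 1) := by
    rw [abs_le] at hj
    by_contra! hne
    exact hxt (add_intCast_mem_arc a (abs_le.2 (by omega)))
  · refine mem_propStep_of_neighborSet_diff_subset hk (v := a + (t : ℤ))
      (add_intCast_mem_arc a (by simp)) ?_ ?_ <;> rw [cycleGraph_neighborSet_add_intCast]
    · exact Or.inr rfl
    · rw [Set.insert_sdiff_of_mem _ (add_intCast_mem_arc a (abs_le.2 (by omega)))]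
      exact Set.sdiff_subset
  · refine mem_propStep_of_neighborSet_diff_subset hk (v := a + (-t : ℤ))
      (add_intCast_mem_arc a (by simp)) ?_ ?_ <;>
      rw [cycleGraph_neighborSet_add_intCast, Set.pair_comm, show -(t : ℤ) - 1 = -(t + 1) by ring]
    · exact Or.inr rfl
    · rw [Set.insert_sdiff_of_mem _ (add_intCast_mem_arc a (abs_le.2 (by omega)))]
      exact Set.sdiff_subset

theorem powerIter_singleton_cycleGraph (hk : 1 ≤ k) (a : Fin (n + 2)) (t : ℕ) :
    powerIter k (cycleGraph (n + 2)) {a} t = arc a t := by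
  induction t using Nat.twoStepInduction with
  | zero => exact (arc_zero a).symm
  | one => exact closedNbhd_singleton_cycleGraph a
  | more t _ ih => rw [powerIter, ih, propStep_arc hk a (Nat.le_add_left 1 t)]

theorem ncard_arc_le (a : Fin (n + 2)) (t : ℕ) : (arc a t).ncard ≤ 2 * t + 1 :=
  calc (arc a t).ncard ≤ (Set.Icc (-(t : ℤ)) t).ncard := Set.ncard_image_le (Set.finite_Icc _ _)
    _ = 2 * t + 1 := by rw [Set.ncard_eq_toFinset_card', Set.toFinset_Icc, Int.card_Icc]; omega

theorem arc_eq_univ_iff (a : Fin (n + 2)) (t : ℕ) :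
    arc a t = Set.univ ↔ n + 2 ≤ 2 * t + 1 := by
  constructor
  · intro h
    simpa [h, Set.ncard_univ] using ncard_arc_le a t
  · intro h
    refine Set.eq_univ_of_forall fun x => mem_arc.2 ?_
    have hlt := (x - a).isLt
    have hx : a + (((x - a).val : ℤ) : Fin (n + 2)) = x := by simp
    by_cases hd : (x - a).val ≤ t
    · exact ⟨(x - a).val, abs_le.2 (by omega), hx⟩
    · refine ⟨(x - a).val - (n + 2 : ℕ), abs_le.2 (by omega), ?_⟩
      rw [Int.cast_sub, Int.cast_natCast (n + 2), Fin.natCast_self, sub_zero, hx]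

end

end PowerProp

open SimpleGraph PowerProp in
/-- For every `k ≥ 1` and `n ≥ 3`, the `k`-power propagation time
of the cycle `C_n` equals `⌊n/2⌋`. -/
theorem ppt_cycleGraph (k n : ℕ) (hk : 1 ≤ k) (hn : 3 ≤ n) :
    ppt k (cycleGraph n) = n / 2 := by
  obtain ⟨m, rfl⟩ : ∃ m, n = m + 2 := ⟨n - 2, by omega⟩
  refine ppt_eq_of_forall_singleton (fun a => ⟨m + 2, ?_⟩) (fun a => pptOf_eq_of_forall_iff ?_)
  · rw [powerIter_singleton_cycleGraph hk, arc_eq_univ_iff]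
    omega
  · intro l
    rw [powerIter_singleton_cycleGraph hk, arc_eq_univ_iff]
    omega
end

section
/- Let k ≥ 1 and let G be a connected finite simple graph on at least 3 vertices. Then there exists an efficient k-power dominating set of G in which every vertex has degree at least 2; that is, there is a minimum k-power dominating set S with ppt_k(G,S) = ppt_k(G) such that every vertex of S has degree at least 2 in G. -/
open SimpleGraph PowerProp

section Aux

variable {V : Type*} [Fintype V] {k : ℕ} {G : SimpleGraph V}

lemma subset_closedNbhd (S : Set V) : S ⊆ closedNbhd G S := Set.subset_union_left

lemma propStep_mono {A B : Set V} (h : B ⊆ A) : propStep k G B ⊆ propStep k G A := by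
  rintro w (hw | ⟨v, hv, ⟨hw1, hw2⟩, hcard⟩)
  · exact Or.inl (h hw)
  · by_cases hwA : w ∈ A
    · exact Or.inl hwA
    · refine Or.inr ⟨v, h hv, ⟨hw1, hwA⟩, le_trans ?_ hcard⟩
      exact Set.ncard_le_ncard (Set.diff_subset_diff_right h) (Set.toFinite _)

lemma powerIter_mono_time (S : Set V) (t : ℕ) :
    powerIter k G S t ⊆ powerIter k G S (t + 1) := by
  match t with
  | 0 => exact subset_closedNbhd S
  | (t + 1) => exact Set.subset_union_left

lemma powerIter_mono_set {A B : Set V} (h : closedNbhd G B ⊆ closedNbhd G A) (t : ℕ) :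
    powerIter k G B (t + 1) ⊆ powerIter k G A (t + 1) := by
  induction t with
  | zero => exact h
  | succ n ih => exact propStep_mono ih

lemma isPDS_of_closedNbhd_subset {A B : Set V} (h : closedNbhd G B ⊆ closedNbhd G A)
    (hB : IsPDS k G B) : IsPDS k G A := by
  obtain ⟨l, hl⟩ := hB
  refine ⟨l + 1, Set.eq_univ_of_univ_subset ?_⟩
  calc Set.univ = powerIter k G B l := hl.symm
    _ ⊆ powerIter k G B (l + 1) := powerIter_mono_time B l
    _ ⊆ powerIter k G A (l + 1) := by
        match l with
        | 0 => exact powerIter_mono_set h 0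
        | (t + 1) => exact powerIter_mono_set h (t + 1)

lemma exists_adj_of_connected (hconn : G.Connected) (h2 : 2 ≤ Fintype.card V) (v : V) :
    ∃ u, G.Adj v u := by
  have : Nontrivial V := Fintype.one_lt_card_iff_nontrivial.mp h2
  obtain ⟨w, hw⟩ := exists_ne v
  refine (hconn v w).elim fun p => ?_
  match p with
  | SimpleGraph.Walk.nil => exact absurd rfl hw.symm
  | SimpleGraph.Walk.cons h q => exact ⟨_, h⟩

lemma card_le_two_of_pendant_pair (u v : V)
    (hu : G.neighborSet u = {v}) (hv : G.neighborSet v = {u})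
    (hconn : G.Connected) : Fintype.card V ≤ 2 := by
  have hstep : ∀ a b : V, G.Adj a b → a ∈ ({u, v} : Set V) → b ∈ ({u, v} : Set V) := by
    rintro a b hab (rfl | rfl)
    · have : b ∈ G.neighborSet a := hab
      rw [hu] at this; exact Or.inr this
    · have : b ∈ G.neighborSet a := hab
      rw [hv] at this; exact Or.inl this
  have hwalk : ∀ (a b : V), G.Walk a b → a ∈ ({u, v} : Set V) → b ∈ ({u, v} : Set V) := by
    intro a b p
    induction p with
    | nil => exact id
    | cons h q ih => exact fun ha => ih (hstep _ _ h ha)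
  have huniv : (Set.univ : Set V) ⊆ {u, v} := by
    intro x _
    exact (hconn u x).elim fun p => hwalk u x p (Or.inl rfl)
  calc Fintype.card V = (Set.univ : Set V).ncard := by rw [Set.ncard_univ, Nat.card_eq_fintype_card]
    _ ≤ ({u, v} : Set V).ncard := Set.ncard_le_ncard huniv (Set.toFinite _)
    _ ≤ 2 := (Set.ncard_insert_le u {v}).trans (by simp [Set.ncard_singleton])

end Aux

open SimpleGraph PowerProp in
/-- A connected graph on at least 3 vertices has an efficient minimum `k`-power
dominating set all of whose vertices have degree at least 2. -/
theorem exists_efficient_minPDS_minDegreeTwo {V : Type*} [Fintype V]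
    (k : ℕ) (hk : 1 ≤ k) (G : SimpleGraph V) (hconn : G.Connected)
    (hcard : 3 ≤ Fintype.card V) :
    ∃ S : Set V, IsMinPDS k G S ∧ pptOf k G S = ppt k G ∧
      ∀ v ∈ S, 2 ≤ (G.neighborSet v).ncard := by
  classical
  have h2 : 2 ≤ Fintype.card V := by omega
  -- a minimum PDS exists
  have hPDSuniv : IsPDS k G (Set.univ : Set V) := ⟨0, rfl⟩
  have hne : {n | ∃ S : Set V, S.ncard = n ∧ IsPDS k G S}.Nonempty :=
    ⟨(Set.univ : Set V).ncard, Set.univ, rfl, hPDSuniv⟩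
  obtain ⟨S₁, hS₁card, hS₁pds⟩ := Nat.sInf_mem hne
  have hminS₁ : IsMinPDS k G S₁ := ⟨hS₁pds, hS₁card⟩
  -- an efficient minimum PDS exists
  have hne2 : {t | ∃ S : Set V, IsMinPDS k G S ∧ pptOf k G S = t}.Nonempty :=
    ⟨pptOf k G S₁, S₁, hminS₁, rfl⟩
  obtain ⟨S₀, hS₀min, hS₀ppt⟩ := Nat.sInf_mem hne2
  -- strong induction on the number of low-degree vertices of the set
  suffices H : ∀ m : ℕ, ∀ S : Set V, IsMinPDS k G S → pptOf k G S = ppt k G →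
      {w ∈ S | (G.neighborSet w).ncard < 2}.ncard = m →
      ∃ S' : Set V, IsMinPDS k G S' ∧ pptOf k G S' = ppt k G ∧
        ∀ v ∈ S', 2 ≤ (G.neighborSet v).ncard by
    exact H _ S₀ hS₀min hS₀ppt rfl
  intro m
  induction m using Nat.strong_induction_on with
  | _ m IH =>
    intro S hmin hppt hbad
    by_cases hB : {w ∈ S | (G.neighborSet w).ncard < 2} = ∅
    · refine ⟨S, hmin, hppt, fun v hv => ?_⟩
      by_contra hlt
      exact Set.eq_empty_iff_forall_notMem.mp hB v ⟨hv, by omega⟩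
    · obtain ⟨v, hvS, hvdeg⟩ := Set.nonempty_iff_ne_empty.mpr hB
      -- v has exactly one neighbor u
      obtain ⟨u, huv⟩ := exists_adj_of_connected hconn h2 v
      have hNv : G.neighborSet v = {u} := by
        have h1 : 1 ≤ (G.neighborSet v).ncard :=
          (Set.ncard_pos (Set.toFinite _)).mpr ⟨u, huv⟩
        obtain ⟨w, hw⟩ := Set.ncard_eq_one.mp (by omega : (G.neighborSet v).ncard = 1)
        have huw : u ∈ G.neighborSet v := huv
        rw [hw] at huw
        rw [hw, Set.mem_singleton_iff.mp huw]
      have hvu : v ≠ u := G.ne_of_adj huv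
      -- u has degree at least 2
      have hudeg : 2 ≤ (G.neighborSet u).ncard := by
        by_contra hle
        have h1 : 1 ≤ (G.neighborSet u).ncard :=
          (Set.ncard_pos (Set.toFinite _)).mpr ⟨v, huv.symm⟩
        obtain ⟨w, hw⟩ := Set.ncard_eq_one.mp (by omega : (G.neighborSet u).ncard = 1)
        have hvw : v ∈ G.neighborSet u := huv.symm
        rw [hw] at hvw
        have := card_le_two_of_pendant_pair u v
          (by rw [hw, Set.mem_singleton_iff.mp hvw]) hNv hconn
        omega
      have hSpos : 1 ≤ S.ncard := (Set.ncard_pos (Set.toFinite _)).mpr ⟨v, hvS⟩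
      by_cases huS : u ∈ S
      · -- then S \ {v} is a smaller PDS: contradiction with minimality
        exfalso
        set T := S \ {v} with hT
        have huT : u ∈ T := ⟨huS, fun h => hvu (Set.mem_singleton_iff.mp h).symm⟩
        have hsub : closedNbhd G S ⊆ closedNbhd G T := by
          rintro x (hx | hx)
          · by_cases hxv : x = v
            · subst hxv
              exact Or.inr (Set.mem_biUnion huT (huv.symm : x ∈ G.neighborSet u))
            · exact Or.inl ⟨hx, hxv⟩
          · simp only [Set.mem_iUnion] at hx
            obtain ⟨w, hwS, hxw⟩ := hx
            by_cases hwv : w = v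
            · subst hwv
              rw [hNv] at hxw
              exact Or.inl (by simpa using hxw ▸ huT)
            · exact Or.inr (Set.mem_biUnion (⟨hwS, hwv⟩ : w ∈ T) hxw)
        have hTpds : IsPDS k G T := isPDS_of_closedNbhd_subset hsub hmin.1
        have hTcard : T.ncard = S.ncard - 1 := by
          rw [hT, Set.ncard_diff_singleton_of_mem hvS]
        have hle : pdNum k G ≤ T.ncard := Nat.sInf_le ⟨T, rfl, hTpds⟩
        have hSeq : S.ncard = pdNum k G := hmin.2
        omega
      · -- replace v by u
        set S' := insert u (S \ {v}) with hS'
        have huT : u ∉ S \ {v} := fun h => huS h.1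
        have hcard' : S'.ncard = S.ncard := by
          rw [hS', Set.ncard_insert_of_notMem huT (Set.toFinite _),
            Set.ncard_diff_singleton_of_mem hvS]
          omega
        have hsub : closedNbhd G S ⊆ closedNbhd G S' := by
          have huS' : u ∈ S' := Set.mem_insert _ _
          rintro x (hx | hx)
          · by_cases hxv : x = v
            · subst hxv
              exact Or.inr (Set.mem_biUnion huS' (huv.symm : x ∈ G.neighborSet u))
            · exact Or.inl (Set.mem_insert_of_mem _ ⟨hx, hxv⟩)
          · simp only [Set.mem_iUnion] at hx
            obtain ⟨w, hwS, hxw⟩ := hx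
            by_cases hwv : w = v
            · subst hwv
              rw [hNv] at hxw
              exact Or.inl (hxw ▸ huS')
            · exact Or.inr (Set.mem_biUnion (Set.mem_insert_of_mem _ ⟨hwS, hwv⟩) hxw)
        have hS'pds : IsPDS k G S' := isPDS_of_closedNbhd_subset hsub hmin.1
        have hmin' : IsMinPDS k G S' := ⟨hS'pds, hcard'.trans hmin.2⟩
        -- propagation time does not increase
        have hlmem : powerIter k G S (pptOf k G S) = Set.univ :=
          Nat.sInf_mem (hmin.1 : {l | powerIter k G S l = Set.univ}.Nonempty)
        have hl1 : 1 ≤ pptOf k G S := by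
          by_contra h0
          have h00 : powerIter k G S 0 = Set.univ := by
            have : pptOf k G S = 0 := by omega
            rwa [this] at hlmem
          have : S = Set.univ := h00
          exact huS (this ▸ Set.mem_univ u)
        obtain ⟨t, ht⟩ := Nat.exists_eq_add_of_le hl1
        have hppt'le : pptOf k G S' ≤ pptOf k G S := by
          apply Nat.sInf_le
          show powerIter k G S' (pptOf k G S) = Set.univ
          rw [ht] at hlmem ⊢
          rw [Nat.add_comm] at hlmem ⊢
          exact Set.eq_univ_of_univ_subset (hlmem ▸ powerIter_mono_set hsub t)
        have hppt' : pptOf k G S' = ppt k G :=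
          le_antisymm (hppt ▸ hppt'le) (Nat.sInf_le ⟨S', hmin', rfl⟩)
        -- the low-degree set strictly decreases
        have hbadsub : {w ∈ S' | (G.neighborSet w).ncard < 2} ⊆
            {w ∈ S | (G.neighborSet w).ncard < 2} \ {v} := by
          rintro w ⟨hwS', hwdeg⟩
          rcases hwS' with rfl | ⟨hwS, hwv⟩
          · omega
          · exact ⟨⟨hwS, hwdeg⟩, hwv⟩
        have hvbad : v ∈ {w ∈ S | (G.neighborSet w).ncard < 2} := ⟨hvS, hvdeg⟩
        have hlt : {w ∈ S' | (G.neighborSet w).ncard < 2}.ncard < m := by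
          calc {w ∈ S' | (G.neighborSet w).ncard < 2}.ncard
              ≤ ({w ∈ S | (G.neighborSet w).ncard < 2} \ {v}).ncard :=
                Set.ncard_le_ncard hbadsub (Set.toFinite _)
            _ = m - 1 := by rw [Set.ncard_diff_singleton_of_mem hvbad, hbad]
            _ < m := by
                have : 1 ≤ m := hbad ▸
                  ((Set.ncard_pos (Set.toFinite _)).mpr ⟨v, hvbad⟩)
                omega
        exact IH _ hlt S' hmin' hppt' rfl
end

section
/- Let k ≥ 1 and let t be an integer with 3 ≤ t ≤ k+2. If G is a connected finite simple graph with maximum degree Δ(G) ≥ t, then there exists a minimum k-power dominating set S of G such that every vertex in S has degree at least t in G. -/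
/-! Moving a vertex of degree at most `k + 1` of a `k`-power dominating set to a neighbour keeps
the set `k`-power dominating without increasing its size. Fix a vertex `w` of degree at least `t`;
among minimum `k`-power dominating sets take one with least total distance to `w`. A vertex of
degree below `t ≤ k + 2` in it could be moved one step closer to `w`, lowering that total. -/

open SimpleGraph

namespace PowerProp

variable {V : Type*} (k : ℕ) (G : SimpleGraph V)

lemma subset_closedNbhd (S : Set V) : S ⊆ closedNbhd G S :=
  Set.subset_union_left

lemma subset_propStep (S : Set V) : S ⊆ propStep k G S :=
  Set.subset_union_left

lemma propStep_mono [Finite V] {S T : Set V} (h : S ⊆ T) : propStep k G S ⊆ propStep k G T := by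
  rintro w (hw | ⟨v, hv, ⟨hadj, -⟩, hcard⟩)
  · exact Or.inl (h hw)
  · by_cases hwT : w ∈ T
    · exact Or.inl hwT
    · exact Or.inr ⟨v, h hv, ⟨hadj, hwT⟩,
        (Set.ncard_le_ncard (Set.sdiff_subset_sdiff_right h) (Set.toFinite _)).trans hcard⟩

lemma powerIter_subset_powerIter_succ [Finite V] {S T : Set V}
    (h0 : S ⊆ powerIter k G T 1) (h1 : powerIter k G S 1 ⊆ powerIter k G T 2) :
    ∀ m, powerIter k G S m ⊆ powerIter k G T (m + 1)
  | 0 => h0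
  | 1 => h1
  | m + 2 => propStep_mono k G (powerIter_subset_powerIter_succ h0 h1 (m + 1))

lemma IsPDS.of_subset_powerIter_succ [Finite V] {S T : Set V} (hS : IsPDS k G S)
    (h0 : S ⊆ powerIter k G T 1) (h1 : powerIter k G S 1 ⊆ powerIter k G T 2) :
    IsPDS k G T := by
  obtain ⟨l, hl⟩ := hS
  refine ⟨l + 1, Set.eq_univ_of_univ_subset ?_⟩
  exact hl ▸ powerIter_subset_powerIter_succ k G h0 h1 l

/-- `u` dominates `v`, after which `v` has at most `k` unobserved neighbours and forces all of
`N[v]`; so everything observed from `S` is observed from the new set one step later. -/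
lemma IsPDS.insert_sdiff_singleton [Finite V] {S : Set V} {v u : V} (hS : IsPDS k G S)
    (hv : v ∈ S) (hadj : G.Adj v u) (hdeg : (G.neighborSet v).ncard ≤ k + 1) :
    IsPDS k G (insert u (S \ {v})) := by
  set T := insert u (S \ {v})
  have huT : u ∈ T := Set.mem_insert _ _
  have h0 : S ⊆ powerIter k G T 1 := by
    intro x hx
    by_cases hxv : x = v
    · exact hxv ▸ Or.inr (Set.mem_biUnion huT hadj.symm)
    · exact subset_closedNbhd G T (Set.mem_insert_of_mem _ ⟨hx, hxv⟩)
  have hNv : G.neighborSet v ⊆ powerIter k G T 2 := by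
    intro w hw
    by_cases hwT : w ∈ powerIter k G T 1
    · exact subset_propStep k G _ hwT
    · refine Or.inr ⟨v, h0 hv, ⟨hw, hwT⟩, ?_⟩
      have hu : u ∈ powerIter k G T 1 := subset_closedNbhd G T huT
      calc (G.neighborSet v \ powerIter k G T 1).ncard
          ≤ (G.neighborSet v \ {u}).ncard :=
            Set.ncard_le_ncard (Set.sdiff_subset_sdiff_right (by simpa using hu))
              (Set.toFinite _)
        _ = (G.neighborSet v).ncard - 1 := Set.ncard_sdiff_singleton_of_mem hadj
        _ ≤ k := by omega
  refine hS.of_subset_powerIter_succ k G h0 ?_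
  rintro x (hx | hx)
  · exact subset_propStep k G _ (h0 hx)
  · obtain ⟨y, hy, hxy⟩ := Set.mem_iUnion₂.mp hx
    by_cases hyv : y = v
    · exact hNv (hyv ▸ hxy)
    · exact subset_propStep k G _ (Or.inr (Set.mem_biUnion (Set.mem_insert_of_mem _ ⟨hy, hyv⟩) hxy))

lemma exists_isMinPDS [Finite V] : ∃ S, IsMinPDS k G S := by
  obtain ⟨S, hcard, hS⟩ := Nat.sInf_mem (⟨_, Set.univ, rfl, 0, rfl⟩ :
    {n | ∃ S : Set V, S.ncard = n ∧ IsPDS k G S}.Nonempty)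
  exact ⟨S, hS, hcard⟩

lemma IsMinPDS.of_ncard_le [Finite V] {S T : Set V} (hS : IsMinPDS k G S) (hT : IsPDS k G T)
    (hle : T.ncard ≤ S.ncard) : IsMinPDS k G T :=
  ⟨hT, le_antisymm (hle.trans_eq hS.2) (Nat.sInf_le ⟨T, rfl, hT⟩)⟩

lemma IsMinPDS.insert_sdiff_singleton [Finite V] {S : Set V} {v u : V} (hS : IsMinPDS k G S)
    (hv : v ∈ S) (hadj : G.Adj v u) (hdeg : (G.neighborSet v).ncard ≤ k + 1) :
    IsMinPDS k G (insert u (S \ {v})) := by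
  refine hS.of_ncard_le k G (hS.1.insert_sdiff_singleton k G hv hadj hdeg) ?_
  calc (insert u (S \ {v})).ncard ≤ (S \ {v}).ncard + 1 := Set.ncard_insert_le _ _
    _ = S.ncard := Set.ncard_sdiff_singleton_add_one hv

end PowerProp

lemma SimpleGraph.Connected.exists_adj_dist_lt {V : Type*} {G : SimpleGraph V}
    (hconn : G.Connected) {v w : V} (hvw : v ≠ w) :
    ∃ u, G.Adj v u ∧ G.dist u w < G.dist v w := by
  obtain ⟨p, hp⟩ := hconn.exists_walk_length_eq_dist v w
  cases p with
  | nil => exact absurd rfl hvw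
  | cons hadj q =>
    refine ⟨_, hadj, ?_⟩
    rw [← hp, Walk.length_cons]
    exact Nat.lt_succ_of_le (dist_le q)

lemma Set.finsum_mem_insert_sdiff_singleton_lt {α : Type*} {S : Set α} (hS : S.Finite)
    {f : α → ℕ} {v u : α} (hv : v ∈ S) (hlt : f u < f v) :
    ∑ᶠ x ∈ insert u (S \ {v}), f x < ∑ᶠ x ∈ S, f x := by
  have hsplit : ∑ᶠ x ∈ S, f x = f v + ∑ᶠ x ∈ S \ {v}, f x := by
    rw [← finsum_mem_insert f (a := v) (s := S \ {v}) (fun h => h.2 rfl) hS.sdiff,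
      Set.insert_sdiff_singleton, Set.insert_eq_of_mem hv]
  by_cases hu : u ∈ S \ {v}
  · rw [Set.insert_eq_of_mem hu, hsplit]
    omega
  · rw [finsum_mem_insert f hu hS.sdiff, hsplit]
    omega

open SimpleGraph PowerProp in
theorem exists_minPDS_minDegree_general {V : Type*} [Fintype V]
    (k t : ℕ) (htk : t ≤ k + 2)
    (G : SimpleGraph V) (hconn : G.Connected)
    (hΔ : ∃ v : V, t ≤ (G.neighborSet v).ncard) :
    ∃ S : Set V, IsMinPDS k G S ∧ ∀ v ∈ S, t ≤ (G.neighborSet v).ncard := by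
  obtain ⟨w, hw⟩ := hΔ
  obtain ⟨S, hS, hleast⟩ := Set.exists_min_image {S | IsMinPDS k G S}
    (fun S => ∑ᶠ x ∈ S, G.dist x w) (Set.toFinite _) (exists_isMinPDS k G)
  refine ⟨S, hS, fun v hv => ?_⟩
  by_contra! hdeg
  have hvw : v ≠ w := by rintro rfl; omega
  obtain ⟨u, hadj, hcloser⟩ := hconn.exists_adj_dist_lt hvw
  have hT := IsMinPDS.insert_sdiff_singleton k G hS hv hadj (by omega)
  exact (hleast _ hT).not_gt (Set.finsum_mem_insert_sdiff_singleton_lt (Set.toFinite S) hv hcloser)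

open SimpleGraph PowerProp in
/-- If `3 ≤ t ≤ k+2` and `G` is connected with maximum degree at least `t`, then
there is a minimum `k`-power dominating set all of whose vertices have degree at least `t`. -/
theorem exists_minPDS_minDegree {V : Type*} [Fintype V]
    (k t : ℕ) (hk : 1 ≤ k) (ht : 3 ≤ t) (htk : t ≤ k + 2)
    (G : SimpleGraph V) (hconn : G.Connected)
    (hΔ : ∃ v : V, t ≤ (G.neighborSet v).ncard) :
    ∃ S : Set V, IsMinPDS k G S ∧ ∀ v ∈ S, t ≤ (G.neighborSet v).ncard :=
  exists_minPDS_minDegree_general k t htk G hconn hΔ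
end
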